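/- arXiv:1610.09254 — 4 statements merged into one kernel-verified Lean document; each statement's English description precedes it below -/
import Mathlib

section
/- Let A be a type and let X be an ω-complete partial order with a least element ⊥, and let f : A → X be any function. Then there exists a unique function g : Part A → X such that g is ω-continuous (monotone and preserving least upper bounds of ℕ-indexed chains), g ⊥ = ⊥, and g (Part.some a) = f a for all a : A. In other words, Part A is the free pointed ωCPO on A. -/
open OmegaCompletePartialOrder

open scoped Classical in
noncomputable def partExtend {A X : Type*} [PartialOrder X] [OrderBot X] (f : A → X) (x : Part A) : X :=
  if h : x.Dom then f (x.get h) else ⊥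

lemma partExtend_mono {A X : Type*} [PartialOrder X] [OrderBot X] (f : A → X) :
    Monotone (partExtend f) := by
  intro x y hxy
  unfold partExtend
  split_ifs with hx hy hy
  · obtain ⟨hy', he⟩ := hxy _ (Part.get_mem hx)
    rw [← he]
  · obtain ⟨hy', -⟩ := hxy _ (Part.get_mem hx)
    exact absurd hy' hy
  · exact bot_le
  · exact le_rfl

lemma partExtend_some {A X : Type*} [PartialOrder X] [OrderBot X] (f : A → X) (a : A) :
    partExtend f (Part.some a) = f a := by
  simp [partExtend, Part.some_dom]

lemma partExtend_bot {A X : Type*} [PartialOrder X] [OrderBot X] (f : A → X) :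
    partExtend f (⊥ : Part A) = ⊥ :=
  dif_neg Part.not_none_dom

/-- **`Part A` is the free pointed ω-CPO on `A`.** For any type `A`, any ω-complete partial
order `X` with a least element, and any function `f : A → X`, there is a unique function
`g : Part A → X` that is ω-continuous (monotone and preserving least upper bounds of
ℕ-indexed chains), strict (`g ⊥ = ⊥`), and satisfies `g (Part.some a) = f a` for all `a`. -/
theorem part_free_pointed_omegaCPO {A : Type*} {X : Type*}
    [OmegaCompletePartialOrder X] [OrderBot X] (f : A → X) :
    ∃! g : Part A → X,
      (∃ hm : Monotone g, ∀ c : Chain (Part A), g (ωSup c) = ωSup (c.map ⟨g, hm⟩)) ∧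
      g ⊥ = ⊥ ∧
      (∀ a : A, g (Part.some a) = f a) := by
  refine ⟨partExtend f, ⟨⟨partExtend_mono f, ?_⟩, partExtend_bot f, partExtend_some f⟩, ?_⟩
  · intro c
    by_cases h : ∃ a, Part.some a ∈ c
    · obtain ⟨a, n, hn⟩ := h
      have hsup : ωSup c = Part.some a := Part.ωSup_eq_some ⟨n, hn⟩
      rw [hsup, partExtend_some]
      apply le_antisymm
      · have : (c.map ⟨partExtend f, partExtend_mono f⟩) n = f a := by
          simp [Chain.map_coe, Function.comp, ← hn, partExtend_some]
        rw [← this]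
        exact le_ωSup _ n
      · apply ωSup_le
        intro i
        simp only [Chain.map_coe, Function.comp]
        have : c i ≤ Part.some a := hsup ▸ le_ωSup c i
        have := partExtend_mono f this
        rwa [partExtend_some] at this
    · have hsup : ωSup c = Part.none := Part.ωSup_eq_none h
      rw [hsup]
      have hb : partExtend f (Part.none : Part A) = ⊥ := partExtend_bot f
      rw [hb]
      apply le_antisymm bot_le
      apply ωSup_le
      intro i
      simp only [Chain.map_coe, Function.comp]
      have : c i ≤ Part.none := hsup ▸ le_ωSup c i
      have := partExtend_mono f this
      rwa [hb] at this
  · rintro g ⟨-, hbot, hsome⟩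
    funext x
    rcases Part.eq_none_or_eq_some x with rfl | ⟨a, rfl⟩
    · rw [show (Part.none : Part A) = ⊥ from rfl, hbot, partExtend_bot f]
    · rw [hsome, partExtend_some]
end

section
/- For every type A, the type Seq A of monotone sequences over A is equivalent (in bijection) with the delay type D A, the final coalgebra of the functor X ↦ A ⊕ X. -/
/-!
Mathlib's `Computation A` is the type of sequences `ℕ → Option A` whose value, once defined,
never changes, which is exactly the monotonicity condition of `MonSeq A`. Like `Delay A`, it is a
final coalgebra of `X ↦ A ⊕ X`, with destructor `Computation.destruct`. So each of the two types
maps to the other by corecursion along the other's destructor, and both composites are the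
identity by bisimulation.
-/

universe u

/-- Monotone sequences over `A`: functions `ℕ → Option A` that, at each step, either stay
the same or go from `none` to a defined value. -/
def MonSeq (A : Type u) : Type u :=
  {g : ℕ → Option A // ∀ n : ℕ, g n = g (n + 1) ∨ (g n = none ∧ g (n + 1) ≠ none)}

/-- The polynomial functor `X ↦ A ⊕ X`: the head `Sum.inl a` has no children, the head
`Sum.inr _` has exactly one child. -/
def delayPFunctor (A : Type u) : PFunctor.{u} :=
  ⟨A ⊕ PUnit, fun x => Sum.elim (fun _ => PEmpty) (fun _ => PUnit) x⟩

/-- The delay type `D A`, the final coalgebra (M-type) of `X ↦ A ⊕ X`. -/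
def Delay (A : Type u) : Type u := (delayPFunctor A).M

theorem Option.eq_or_eq_none_and_ne_none_iff {A : Type*} {x y : Option A} :
    (x = y ∨ (x = none ∧ y ≠ none)) ↔ ∀ a, x = some a → y = some a := by
  cases x <;> cases y <;> simp [eq_comm]

def MonSeq.equivComputation (A : Type u) : MonSeq A ≃ Computation A :=
  Equiv.subtypeEquivRight fun _ =>
    forall_congr' fun _ => Option.eq_or_eq_none_and_ne_none_iff

namespace Delay

variable {A : Type u} {X : Type*}

def dest (d : Delay A) : A ⊕ Delay A :=
  match PFunctor.M.dest d with
  | ⟨Sum.inl a, _⟩ => Sum.inl a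
  | ⟨Sum.inr _, f⟩ => Sum.inr (f PUnit.unit)

def corec (f : X → A ⊕ X) : X → Delay A :=
  PFunctor.M.corec fun x =>
    match f x with
    | Sum.inl a => ⟨Sum.inl a, PEmpty.elim⟩
    | Sum.inr x' => ⟨Sum.inr PUnit.unit, fun _ => x'⟩

theorem dest_corec (f : X → A ⊕ X) (x : X) :
    dest (corec f x) = Sum.map id (corec f) (f x) := by
  rw [dest, corec, PFunctor.M.dest_corec]
  cases f x <;> rfl

theorem eq_of_bisim (R : Delay A → Delay A → Prop)
    (h : ∀ x y, R x y → Sum.LiftRel Eq R (dest x) (dest y)) {x y : Delay A} (hxy : R x y) :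
    x = y := by
  refine PFunctor.M.bisim R (fun d₁ d₂ hd => ?_) x y hxy
  have hdest := h d₁ d₂ hd
  rcases h₁ : PFunctor.M.dest d₁ with ⟨a | ⟨⟩, f⟩ <;>
    rcases h₂ : PFunctor.M.dest d₂ with ⟨b | ⟨⟩, f'⟩ <;>
    simp only [dest, h₁, h₂] at hdest <;> cases hdest
  case inl.inl.inl hab =>
    subst hab
    exact ⟨_, f, f', rfl, rfl, fun i => i.elim⟩
  case inr.inr.inr hR =>
    exact ⟨_, f, f', rfl, rfl, fun _ => hR⟩

end Delay

def Computation.equivDelay (A : Type u) : Computation A ≃ Delay A where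
  toFun := Delay.corec Computation.destruct
  invFun := Computation.corec Delay.dest
  left_inv c := by
    refine Computation.eq_of_bisim
      (fun c₁ c₂ => c₁ = Computation.corec Delay.dest (Delay.corec Computation.destruct c₂)) ?_ rfl
    rintro _ c rfl
    rw [Computation.corec_eq, Delay.dest_corec]
    cases Computation.destruct c <;> simp
  right_inv d := by
    refine Delay.eq_of_bisim
      (fun d₁ d₂ => d₁ = Delay.corec Computation.destruct (Computation.corec Delay.dest d₂)) ?_ rfl
    rintro _ d rfl
    rw [Delay.dest_corec, Computation.corec_eq]
    cases Delay.dest d <;> simp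

/-- **The monotone sequences over `A` are in bijection with the delay type `D A`.** -/
theorem monSeq_equiv_delay (A : Type u) : Nonempty (MonSeq A ≃ Delay A) :=
  ⟨(MonSeq.equivComputation A).trans (Computation.equivDelay A)⟩
end

section
/- For every type A, the quotient of Seq A by weak bisimilarity ~_Seq is equivalent (in bijection) with the quotient of the delay type D A by weak bisimilarity ~_D. -/
universe u

/-- `s` terminates with value `a` if `s n = some a` for some `n`. -/
def MonSeq.Terminates {A : Type u} (s : MonSeq A) (a : A) : Prop :=
  ∃ n : ℕ, s.1 n = some a

/-- `s ⊑ t`: every value of `s` is a value of `t`. -/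
def MonSeq.Le {A : Type u} (s t : MonSeq A) : Prop :=
  ∀ a : A, s.Terminates a → t.Terminates a

/-- Weak bisimilarity of monotone sequences. -/
def MonSeq.Bisim {A : Type u} (s t : MonSeq A) : Prop :=
  MonSeq.Le s t ∧ MonSeq.Le t s

/-- The constructor `now : A → D A`. -/
def Delay.now {A : Type u} (a : A) : Delay A :=
  PFunctor.M.mk ⟨Sum.inl a, fun e => PEmpty.elim e⟩

/-- The constructor `later : D A → D A`. -/
def Delay.later {A : Type u} (x : Delay A) : Delay A :=
  PFunctor.M.mk ⟨Sum.inr PUnit.unit, fun _ => x⟩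

/-- `x ↓_D a`: the computation `x` terminates with value `a` after finitely many steps. -/
def Delay.Terminates {A : Type u} (x : Delay A) (a : A) : Prop :=
  ∃ n : ℕ, x = Delay.later^[n] (Delay.now a)

/-- Weak bisimilarity on the delay type. -/
def Delay.Bisim {A : Type u} (x y : Delay A) : Prop :=
  ∀ a : A, x.Terminates a ↔ y.Terminates a

namespace DelayAux

variable {A : Type u}

/-- Auxiliary mk-equality lemmas. -/
lemma mk_inl_eq (a : A) (f g : PEmpty.{u+1} → Delay A) :
    PFunctor.M.mk (F := delayPFunctor A) ⟨Sum.inl a, f⟩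
      = PFunctor.M.mk (F := delayPFunctor A) ⟨Sum.inl a, g⟩ := by
  have : f = g := funext fun e => PEmpty.elim e
  rw [this]

lemma mk_inr_eq (f g : PUnit.{u+1} → Delay A) (h : ∀ u, f u = g u) :
    PFunctor.M.mk (F := delayPFunctor A) ⟨Sum.inr PUnit.unit, f⟩
      = PFunctor.M.mk (F := delayPFunctor A) ⟨Sum.inr PUnit.unit, g⟩ := by
  rw [funext h]

/-- The corecursion step for converting a monotone sequence to a delay element. -/
def step (s : MonSeq A) (n : ℕ) : (delayPFunctor A).Obj ℕ :=
  match s.1 n with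
  | some a => ⟨Sum.inl a, fun e => e.elim⟩
  | none => ⟨Sum.inr PUnit.unit, fun _ => n + 1⟩

def toDelayAux (s : MonSeq A) (n : ℕ) : Delay A :=
  PFunctor.M.corec (step s) n

lemma toDelayAux_some {s : MonSeq A} {n : ℕ} {a : A} (h : s.1 n = some a) :
    toDelayAux s n = Delay.now a := by
  rw [← PFunctor.M.mk_dest (toDelayAux s n)]
  have : PFunctor.M.dest (toDelayAux s n)
      = (delayPFunctor A).map (PFunctor.M.corec (step s)) (step s n) :=
    PFunctor.M.dest_corec _ _
  rw [this]
  unfold step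
  rw [h]
  exact mk_inl_eq a _ _

lemma toDelayAux_none {s : MonSeq A} {n : ℕ} (h : s.1 n = none) :
    toDelayAux s n = Delay.later (toDelayAux s (n + 1)) := by
  rw [← PFunctor.M.mk_dest (toDelayAux s n)]
  have : PFunctor.M.dest (toDelayAux s n)
      = (delayPFunctor A).map (PFunctor.M.corec (step s)) (step s n) :=
    PFunctor.M.dest_corec _ _
  rw [this]
  unfold step
  rw [h]
  rfl

/-- First components of dest of now / later. -/
lemma dest_now (a : A) : PFunctor.M.dest (Delay.now a)
    = (⟨Sum.inl a, fun e => PEmpty.elim e⟩ : (delayPFunctor A).Obj (Delay A)) :=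
  PFunctor.M.dest_mk _

lemma dest_later (x : Delay A) : PFunctor.M.dest (Delay.later x)
    = (⟨Sum.inr PUnit.unit, fun _ => x⟩ : (delayPFunctor A).Obj (Delay A)) :=
  PFunctor.M.dest_mk _

lemma now_ne_later (a : A) (x : Delay A) : Delay.now a ≠ Delay.later x := by
  intro h
  have := congrArg (fun z => (PFunctor.M.dest z).1) h
  simp [dest_now, dest_later] at this

lemma later_inj {x y : Delay A} (h : Delay.later x = Delay.later y) : x = y := by
  have := congrArg PFunctor.M.dest h
  rw [dest_later, dest_later] at this
  injection this with h1 h2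
  exact congrFun h2 PUnit.unit

lemma now_inj {a b : A} (h : Delay.now a = Delay.now b) : a = b := by
  have := congrArg (fun z => (PFunctor.M.dest z).1) h
  simp only [dest_now] at this
  exact Sum.inl.inj this

/-- Monotone sequences stay constant once they are `some`. -/
lemma monseq_stable (s : MonSeq A) {n : ℕ} {a : A} (h : s.1 n = some a) :
    ∀ k, s.1 (n + k) = some a := by
  intro k
  induction k with
  | zero => exact h
  | succ k ih =>
    rcases s.2 (n + k) with h' | h'
    · rw [← Nat.add_assoc] at *; rw [← h', ih]
    · rw [ih] at h'; exact absurd h'.1 (by simp)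

lemma toDelayAux_of_some : ∀ (j : ℕ) (s : MonSeq A) (k : ℕ) (a : A),
    s.1 (k + j) = some a → ∃ m, toDelayAux s k = Delay.later^[m] (Delay.now a) := by
  intro j
  induction j with
  | zero =>
    intro s k a h
    exact ⟨0, toDelayAux_some h⟩
  | succ j ih =>
    intro s k a h
    cases hk : s.1 k with
    | some b =>
      have := monseq_stable s hk (j + 1)
      rw [← Nat.add_assoc] at this
      rw [show k + (j+1) = k + j + 1 from by ring] at h
      rw [h] at this
      refine ⟨0, ?_⟩
      rw [toDelayAux_some hk, Option.some_inj.mp this]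
      rfl
    | none =>
      obtain ⟨m, hm⟩ := ih s (k + 1) a (by rw [show k + 1 + j = k + (j+1) from by ring]; exact h)
      refine ⟨m + 1, ?_⟩
      rw [toDelayAux_none hk, hm, Function.iterate_succ_apply']

lemma toDelayAux_terminates : ∀ (m : ℕ) (s : MonSeq A) (k : ℕ) (a : A),
    toDelayAux s k = Delay.later^[m] (Delay.now a) → ∃ n, s.1 n = some a := by
  intro m
  induction m with
  | zero =>
    intro s k a h
    simp only [Function.iterate_zero, id] at h
    cases hk : s.1 k with
    | some b =>
      rw [toDelayAux_some hk] at h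
      exact ⟨k, by rw [hk, now_inj h]⟩
    | none =>
      rw [toDelayAux_none hk] at h
      exact absurd h.symm (now_ne_later a _)
  | succ m ih =>
    intro s k a h
    rw [Function.iterate_succ_apply'] at h
    cases hk : s.1 k with
    | some b =>
      rw [toDelayAux_some hk] at h
      exact absurd h (now_ne_later b _)
    | none =>
      rw [toDelayAux_none hk] at h
      exact ih s (k + 1) a (later_inj h)

def toDelay (s : MonSeq A) : Delay A := toDelayAux s 0

lemma toDelay_terminates_iff (s : MonSeq A) (a : A) :
    (toDelay s).Terminates a ↔ s.Terminates a := by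
  constructor
  · rintro ⟨m, hm⟩
    exact toDelayAux_terminates m s 0 a hm
  · rintro ⟨n, hn⟩
    exact toDelayAux_of_some n s 0 a (by simpa using hn)

/-- Running a delay element for `n` steps. -/
def run : Delay A → ℕ → Option A
  | x, 0 =>
    match PFunctor.M.dest x with
    | ⟨Sum.inl a, _⟩ => some a
    | ⟨Sum.inr _, _⟩ => none
  | x, n + 1 =>
    match PFunctor.M.dest x with
    | ⟨Sum.inl a, _⟩ => some a
    | ⟨Sum.inr _, k⟩ => run (k PUnit.unit) n

lemma run_now (a : A) : ∀ n, run (Delay.now a) n = some a := by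
  intro n
  cases n <;> simp [run, dest_now]

lemma run_later_zero (x : Delay A) : run (Delay.later x) 0 = none := by
  simp [run, dest_later]

lemma run_later_succ (x : Delay A) (n : ℕ) : run (Delay.later x) (n + 1) = run x n := by
  simp [run, dest_later]

/-- Reconstructing the delay element from `dest`. -/
lemma delay_cases (x : Delay A) : (∃ a, x = Delay.now a) ∨ (∃ y, x = Delay.later y) := by
  rcases hd : PFunctor.M.dest x with ⟨v, k⟩
  cases v with
  | inl a =>
    left
    refine ⟨a, ?_⟩
    rw [← PFunctor.M.mk_dest x, hd]
    exact mk_inl_eq a _ _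
  | inr u =>
    right
    refine ⟨k PUnit.unit, ?_⟩
    rw [← PFunctor.M.mk_dest x, hd]
    cases u
    exact mk_inr_eq _ _ (fun u' => by cases u'; rfl)

def fromDelay (x : Delay A) : MonSeq A := by
  refine ⟨run x, ?_⟩
  have key : ∀ (n : ℕ) (y : Delay A), run y n = run y (n+1) ∨ run y n = none := by
    intro n
    induction n with
    | zero =>
      intro y
      rcases delay_cases y with ⟨a, rfl⟩ | ⟨z, rfl⟩
      · left; rw [run_now, run_now]
      · right; exact run_later_zero z
    | succ n ih =>
      intro y
      rcases delay_cases y with ⟨a, rfl⟩ | ⟨z, rfl⟩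
      · left; rw [run_now, run_now]
      · rw [run_later_succ, run_later_succ]; exact ih z
  intro n
  rcases key n x with h | h
  · exact Or.inl h
  · by_cases h2 : run x (n + 1) = none
    · exact Or.inl (h.trans h2.symm)
    · exact Or.inr ⟨h, h2⟩

lemma run_of_terminates {x : Delay A} {a : A} {m : ℕ}
    (h : x = Delay.later^[m] (Delay.now a)) : run x m = some a := by
  subst h
  induction m with
  | zero => exact run_now a 0
  | succ m ih =>
    rw [Function.iterate_succ_apply', run_later_succ]
    exact ih

lemma terminates_of_run : ∀ (n : ℕ) (x : Delay A) (a : A),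
    run x n = some a → ∃ m, x = Delay.later^[m] (Delay.now a) := by
  intro n
  induction n with
  | zero =>
    intro x a h
    rcases delay_cases x with ⟨b, rfl⟩ | ⟨z, rfl⟩
    · rw [run_now] at h
      exact ⟨0, by simpa using congrArg Delay.now (Option.some_inj.mp h)⟩
    · rw [run_later_zero] at h; exact absurd h (by simp)
  | succ n ih =>
    intro x a h
    rcases delay_cases x with ⟨b, rfl⟩ | ⟨z, rfl⟩
    · rw [run_now] at h
      exact ⟨0, by simpa using congrArg Delay.now (Option.some_inj.mp h)⟩
    · rw [run_later_succ] at h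
      obtain ⟨m, hm⟩ := ih z a h
      exact ⟨m + 1, by rw [hm, Function.iterate_succ_apply']⟩

lemma fromDelay_terminates_iff (x : Delay A) (a : A) :
    (fromDelay x).Terminates a ↔ x.Terminates a := by
  constructor
  · rintro ⟨n, hn⟩
    exact terminates_of_run n x a hn
  · rintro ⟨m, hm⟩
    exact ⟨m, run_of_terminates hm⟩

end DelayAux

/-- **The quotient of monotone sequences by weak bisimilarity is in bijection with the
quotient of the delay type by weak bisimilarity.** -/
theorem monSeq_quot_equiv_delay_quot (A : Type u) :
    Nonempty (Quot (MonSeq.Bisim (A := A)) ≃ Quot (Delay.Bisim (A := A))) := by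
  open DelayAux in
  refine ⟨{
    toFun := Quot.map toDelay ?_
    invFun := Quot.map fromDelay ?_
    left_inv := ?_
    right_inv := ?_ }⟩
  · intro s t ⟨h1, h2⟩ a
    rw [toDelay_terminates_iff, toDelay_terminates_iff]
    exact ⟨h1 a, h2 a⟩
  · intro x y h
    constructor <;> intro a
    · intro ha
      rw [fromDelay_terminates_iff] at *
      exact (h a).mp ha
    · intro ha
      rw [fromDelay_terminates_iff] at *
      exact (h a).mpr ha
  · intro q
    induction q using Quot.ind with
    | _ s =>
      apply Quot.sound
      constructor <;> intro a h
      · rw [fromDelay_terminates_iff, toDelay_terminates_iff] at h; exact h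
      · rw [fromDelay_terminates_iff, toDelay_terminates_iff]; exact h
  · intro q
    induction q using Quot.ind with
    | _ x =>
      apply Quot.sound
      intro a
      rw [toDelay_terminates_iff, fromDelay_terminates_iff]
end

section
/- Let f : ℕ → ℚ satisfy the Cauchy condition: for all m, n : ℕ with m < n, -1 < m * (f m - f n) and m * (f m - f n) < 1, and let r : ℝ be the limit of the sequence n ↦ (f n : ℝ) (which exists). Define g : ℕ → Part Bool by g 0 = Part.none and g (n+1) = if g n ≠ Part.none then g n else if (n+1 : ℚ) * f (n+1) < -2 then Part.some false else if 2 < (n+1 : ℚ) * f (n+1) then Part.some true else Part.none. Then g is an increasing chain in Part Bool, and its least upper bound ωSup g equals Part.some true if r > 0, equals Part.some false if r < 0, and equals Part.none if r = 0. -/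
open OmegaCompletePartialOrder
open scoped Classical

/-- **Deciding the sign of a real number in the partiality monad.** Let `f : ℕ → ℚ` be a
Cauchy sequence with the stated modulus, and let `r : ℝ` be the limit of `n ↦ (f n : ℝ)`.
Define `g : ℕ → Part Bool` by `g 0 = Part.none` and
`g (n+1) = if g n ≠ Part.none then g n else if (n+1) * f (n+1) < -2 then Part.some false
else if 2 < (n+1) * f (n+1) then Part.some true else Part.none`.
Then `g` is an increasing chain, and its least upper bound is `Part.some true` if `r > 0`,
`Part.some false` if `r < 0`, and `Part.none` if `r = 0`. -/
theorem isPositive_sign_of_cauchy (f : ℕ → ℚ)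
    (hf : ∀ m n : ℕ, m < n →
      -1 < (m : ℚ) * (f m - f n) ∧ (m : ℚ) * (f m - f n) < 1)
    (r : ℝ) (hr : Filter.Tendsto (fun n : ℕ => (f n : ℝ)) Filter.atTop (nhds r))
    (g : ℕ → Part Bool)
    (hg0 : g 0 = Part.none)
    (hgs : ∀ n : ℕ, g (n + 1) =
      if g n ≠ Part.none then g n
      else if ((n + 1 : ℕ) : ℚ) * f (n + 1) < -2 then Part.some false
      else if 2 < ((n + 1 : ℕ) : ℚ) * f (n + 1) then Part.some true
      else Part.none) :
    ∃ hmono : Monotone g,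
      (r > 0 → ωSup ⟨g, hmono⟩ = Part.some true) ∧
      (r < 0 → ωSup ⟨g, hmono⟩ = Part.some false) ∧
      (r = 0 → ωSup ⟨g, hmono⟩ = Part.none) := by
  have hstep : ∀ n, g n ≤ g (n + 1) := by
    intro n
    rcases eq_or_ne (g n) Part.none with h | h
    · rw [h]; exact bot_le
    · rw [hgs n, if_pos h]
  have hmono : Monotone g := monotone_nat_of_le_succ hstep
  -- key estimate: |f k - r| ≤ 1/k for k ≥ 1
  have key : ∀ k : ℕ, 1 ≤ k → |(f k : ℝ) - r| ≤ 1 / k := by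
    intro k hk
    have hk0 : (0 : ℝ) < k := by exact_mod_cast hk
    have hev : ∀ᶠ n in Filter.atTop, |(f k : ℝ) - f n| ≤ 1 / k := by
      filter_upwards [Filter.eventually_gt_atTop k] with n hn
      obtain ⟨h2, h3⟩ := hf k n hn
      have hkq : (0 : ℚ) < k := by exact_mod_cast hk
      have h2' : (-1 : ℝ) < (k : ℝ) * ((f k : ℝ) - (f n : ℝ)) := by exact_mod_cast h2
      have h3' : (k : ℝ) * ((f k : ℝ) - (f n : ℝ)) < 1 := by exact_mod_cast h3
      rw [abs_le]
      constructor
      · nlinarith [mul_one_div_cancel hk0.ne']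
      · nlinarith [mul_one_div_cancel hk0.ne']
    have hlim : Filter.Tendsto (fun n : ℕ => |(f k : ℝ) - f n|)
        Filter.atTop (nhds |(f k : ℝ) - r|) :=
      ((tendsto_const_nhds.sub hr).abs)
    exact le_of_tendsto hlim hev
  -- if g n = some b, the sign condition held at some step
  have hval : ∀ n b, g n = Part.some b → ∃ k : ℕ, 1 ≤ k ∧
      ((b = true ∧ 2 < (k : ℚ) * f k) ∨ (b = false ∧ (k : ℚ) * f k < -2)) := by
    intro n
    induction n with
    | zero =>
      intro b h; rw [hg0] at h
      exact absurd h (by simp [Part.none_ne_some])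
    | succ n ih =>
      intro b h
      rw [hgs n] at h
      split_ifs at h with h1 h2 h3
      · exact ih b h
      · have hb : b = false := by
          have := (Part.some_inj).mp h
          exact this.symm
        exact ⟨n + 1, Nat.le_add_left 1 n, Or.inr ⟨hb, h2⟩⟩
      · have hb : b = true := by
          have := (Part.some_inj).mp h
          exact this.symm
        exact ⟨n + 1, Nat.le_add_left 1 n, Or.inl ⟨hb, h3⟩⟩
      · exact absurd h (by simp [Part.none_ne_some])
  -- consequences of the sign condition
  have htrue : ∀ k : ℕ, 1 ≤ k → 2 < (k : ℚ) * f k → 0 < r := by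
    intro k hk h
    have hk0 : (0 : ℝ) < k := by exact_mod_cast hk
    have h' : (2 : ℝ) < (k : ℝ) * f k := by exact_mod_cast h
    have hb := (abs_le.mp (key k hk)).2
    nlinarith [mul_le_mul_of_nonneg_left hb hk0.le, mul_one_div_cancel hk0.ne']
  have hfalse : ∀ k : ℕ, 1 ≤ k → (k : ℚ) * f k < -2 → r < 0 := by
    intro k hk h
    have hk0 : (0 : ℝ) < k := by exact_mod_cast hk
    have h' : ((k : ℝ) * f k : ℝ) < -2 := by exact_mod_cast h
    have hb := (abs_le.mp (key k hk)).1
    nlinarith [mul_le_mul_of_nonneg_left hb hk0.le, mul_one_div_cancel hk0.ne']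
  -- if g N = none for N ≥ 1 then the sign test failed at step N
  have hnone : ∀ m : ℕ, g (m + 1) = Part.none →
      ¬ (((m + 1 : ℕ) : ℚ) * f (m + 1) < -2) ∧ ¬ (2 < ((m + 1 : ℕ) : ℚ) * f (m + 1)) := by
    intro m h
    rw [hgs m] at h
    split_ifs at h with h1 h2 h3
    · exact absurd h h1
    · exact absurd h (by simp [Part.some_ne_none])
    · exact absurd h (by simp [Part.some_ne_none])
    · exact ⟨h2, h3⟩
  refine ⟨hmono, ?_, ?_, ?_⟩
  · -- r > 0
    intro hrpos
    obtain ⟨N, hN⟩ := exists_nat_gt (3 / r)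
    have hN1 : 1 ≤ N := by
      by_contra h
      push_neg at h
      interval_cases N
      · simp at hN
        nlinarith [div_pos (by norm_num : (0:ℝ) < 3) hrpos]
    have hNr : (3 : ℝ) < N * r := by
      rw [div_lt_iff₀ hrpos] at hN
      linarith
    have hN0 : (0 : ℝ) < N := by exact_mod_cast hN1
    -- N * f N > 2
    have hfN : 2 < (N : ℚ) * f N := by
      have hb := (abs_le.mp (key N hN1)).1
      have : (2 : ℝ) < (N : ℝ) * f N := by
        nlinarith [mul_le_mul_of_nonneg_left hb hN0.le, mul_one_div_cancel hN0.ne']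
      have h2 : (2 : ℝ) < ((N : ℚ) * f N : ℚ) := by push_cast; exact this
      exact_mod_cast h2
    -- g N ≠ none
    obtain ⟨m, rfl⟩ := Nat.exists_eq_add_of_le hN1
    have hgN : g (1 + m) ≠ Part.none := by
      intro h
      rw [add_comm] at h
      have := hnone m h
      rw [add_comm] at hfN
      exact this.2 hfN
    rcases Part.eq_none_or_eq_some (g (1 + m)) with hb | ⟨b, hb⟩
    · exact absurd hb hgN
    obtain ⟨k, hk1, hk⟩ := hval _ b hb
    rcases hk with ⟨rfl, hk⟩ | ⟨rfl, hk⟩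
    · exact Part.ωSup_eq_some ⟨1 + m, hb.symm⟩
    · exact absurd (hfalse k hk1 hk) (by linarith)
  · -- r < 0
    intro hrneg
    obtain ⟨N, hN⟩ := exists_nat_gt (3 / (-r))
    have hrpos : (0 : ℝ) < -r := by linarith
    have hN1 : 1 ≤ N := by
      by_contra h
      push_neg at h
      interval_cases N
      · simp at hN
        nlinarith [div_pos (by norm_num : (0:ℝ) < 3) hrpos]
    have hNr : (3 : ℝ) < N * (-r) := by
      rw [div_lt_iff₀ hrpos] at hN
      linarith
    have hN0 : (0 : ℝ) < N := by exact_mod_cast hN1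
    have hfN : (N : ℚ) * f N < -2 := by
      have hb := (abs_le.mp (key N hN1)).2
      have : ((N : ℝ) * f N) < -2 := by
        nlinarith [mul_le_mul_of_nonneg_left hb hN0.le, mul_one_div_cancel hN0.ne']
      have h2 : (((N : ℚ) * f N : ℚ) : ℝ) < -2 := by push_cast; exact this
      exact_mod_cast h2
    obtain ⟨m, rfl⟩ := Nat.exists_eq_add_of_le hN1
    have hgN : g (1 + m) ≠ Part.none := by
      intro h
      rw [add_comm] at h
      have := hnone m h
      rw [add_comm] at hfN
      exact this.1 hfN
    rcases Part.eq_none_or_eq_some (g (1 + m)) with hb | ⟨b, hb⟩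
    · exact absurd hb hgN
    obtain ⟨k, hk1, hk⟩ := hval _ b hb
    rcases hk with ⟨rfl, hk⟩ | ⟨rfl, hk⟩
    · exact absurd (htrue k hk1 hk) (by linarith)
    · exact Part.ωSup_eq_some ⟨1 + m, hb.symm⟩
  · -- r = 0
    intro hr0
    apply Part.ωSup_eq_none
    rintro ⟨b, n, hn⟩
    obtain ⟨k, hk1, hk⟩ := hval n b hn.symm
    rcases hk with ⟨-, hk⟩ | ⟨-, hk⟩
    · have := htrue k hk1 hk; linarith [this]
    · have := hfalse k hk1 hk; linarith [this]
end
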